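/- arXiv:1906.01298 — 5 statements merged into one kernel-verified Lean document; each statement's English description precedes it below -/
import Mathlib

section
/- For all positive real numbers b and c, the inequality c²/4 + c·√(b + c²/16) < c · max{c, 2√b} holds. -/
theorem stmt_2 (b c : ℝ) (hb : 0 < b) (hc : 0 < c) :
    c ^ 2 / 4 + c * Real.sqrt (b + c ^ 2 / 16) < c * max c (2 * Real.sqrt b) := by
  have hsb : Real.sqrt b ^ 2 = b := Real.sq_sqrt hb.le
  have hsbp : 0 < Real.sqrt b := Real.sqrt_pos.mpr hb
  have key : Real.sqrt (b + c ^ 2 / 16) < max c (2 * Real.sqrt b) - c / 4 := by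
    have hM : c ≤ max c (2 * Real.sqrt b) := le_max_left _ _
    rw [Real.sqrt_lt' (by linarith)]
    rcases le_or_gt (2 * Real.sqrt b) c with h | h
    · rw [max_eq_left h]
      nlinarith
    · rw [max_eq_right h.le]
      nlinarith
  nlinarith [mul_lt_mul_of_pos_left key hc]
end

section
/- Let ω > 1, T = π/(2ω) + π/2, and extend v to ℝ₊ by v(t + kT) = (−ω)^k cos(ωt) for t ∈ [0, π/(2ω)] and v(t + kT) = (−ω)^{k+1} sin(t − π/(2ω)) for t ∈ [π/(2ω), T], k ∈ ℕ. Then v solves v'' + α(t)v = 0 on ℝ₊ with α extended T-periodically, and v is unbounded: sup over t ≥ 0 of |v(t)| = +∞ (indeed |v(kT)| = ω^k). -/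
/-!
On the first part of each period `v` is a multiple of `cos (ω (t - kT))`, on the second a
multiple of `sin (t - kT - π/(2ω))`, i.e. a solution of `v'' + ω² v = 0`, resp. `v'' + v = 0`,
where `α` takes exactly these values; so the equation holds off the countable set of
breakpoints. At the start of the `k`-th period `v = (-ω)^k`, which is unbounded as `ω > 1`.
-/

open MeasureTheory Real Set Filter Topology

/-- The general solution of `v'' + ω² v = 0`. -/
noncomputable def sinusoid (ω c₁ c₂ b : ℝ) (s : ℝ) : ℝ :=
  c₁ * cos (ω * (s - b)) + c₂ * sin (ω * (s - b))

theorem hasDerivAt_sinusoid (ω c₁ c₂ b s : ℝ) :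
    HasDerivAt (sinusoid ω c₁ c₂ b) (sinusoid ω (ω * c₂) (-(ω * c₁)) b s) s := by
  have hinner : HasDerivAt (fun s => ω * (s - b)) ω s := by
    simpa using ((hasDerivAt_id s).sub_const b).const_mul ω
  have := ((hasDerivAt_cos _).comp s hinner).const_mul c₁ |>.add
    (((hasDerivAt_sin _).comp s hinner).const_mul c₂)
  exact this.congr_deriv (by simp only [sinusoid]; ring)

theorem deriv_sinusoid (ω c₁ c₂ b : ℝ) :
    deriv (sinusoid ω c₁ c₂ b) = sinusoid ω (ω * c₂) (-(ω * c₁)) b :=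
  funext fun s => (hasDerivAt_sinusoid ω c₁ c₂ b s).deriv

theorem hasDerivAt_deriv_of_eqOn_sinusoid {v : ℝ → ℝ} {U : Set ℝ} {t ω c₁ c₂ b : ℝ}
    (hU : IsOpen U) (ht : t ∈ U) (hv : EqOn v (sinusoid ω c₁ c₂ b) U) :
    HasDerivAt (deriv v) (-(ω ^ 2 * v t)) t := by
  have hderiv : deriv v =ᶠ[𝓝 t] sinusoid ω (ω * c₂) (-(ω * c₁)) b := by
    rw [← deriv_sinusoid]
    exact (hv.eventuallyEq_of_mem (hU.mem_nhds ht)).deriv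
  refine (hasDerivAt_sinusoid ω _ _ b t).congr_of_eventuallyEq hderiv |>.congr_deriv ?_
  rw [hv ht]
  simp only [sinusoid]
  ring

theorem exists_nat_mul_lt_lt_of_notMem {T t : ℝ} (hT : 0 < T) (ht : 0 < t)
    (htB : t ∉ range (fun k : ℕ => k * T)) : ∃ k : ℕ, k * T < t ∧ t < k * T + T := by
  have hdiv : 0 ≤ t / T := (div_pos ht hT).le
  refine ⟨⌊t / T⌋₊, lt_of_le_of_ne ?_ fun h => htB ⟨_, h⟩, ?_⟩
  · exact (le_div_iff₀ hT).mp (Nat.floor_le hdiv)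
  · have := (div_lt_iff₀ hT).mp (Nat.lt_floor_add_one (t / T))
    linarith

section PiecewiseSolution

variable {ω T : ℝ} {v : ℝ → ℝ}

theorem eqOn_sinusoid_of_cos_piece
    (hv : ∀ k : ℕ, ∀ t ∈ Icc 0 (π / (2 * ω)), v (t + k * T) = (-ω) ^ k * cos (ω * t))
    (k : ℕ) :
    EqOn v (sinusoid ω ((-ω) ^ k) 0 (k * T)) (Ioo (k * T) (k * T + π / (2 * ω))) := by
  intro s hs
  have := hv k (s - k * T) ⟨by linarith [hs.1], by linarith [hs.2]⟩
  rw [sub_add_cancel] at this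
  simp [sinusoid, this]

theorem eqOn_sinusoid_of_sin_piece
    (hv : ∀ k : ℕ, ∀ t ∈ Icc (π / (2 * ω)) T,
      v (t + k * T) = (-ω) ^ (k + 1) * sin (t - π / (2 * ω)))
    (k : ℕ) :
    EqOn v (sinusoid 1 0 ((-ω) ^ (k + 1)) (k * T + π / (2 * ω)))
      (Ioo (k * T + π / (2 * ω)) (k * T + T)) := by
  intro s hs
  have := hv k (s - k * T) ⟨by linarith [hs.1], by linarith [hs.2]⟩
  rw [sub_add_cancel] at this
  simp [sinusoid, this, sub_sub]

theorem ae_hasDerivAt_deriv_of_piecewise {α : ℝ → ℝ} (hT : 0 < T)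
    (hv1 : ∀ k : ℕ, ∀ t ∈ Icc 0 (π / (2 * ω)), v (t + k * T) = (-ω) ^ k * cos (ω * t))
    (hv2 : ∀ k : ℕ, ∀ t ∈ Icc (π / (2 * ω)) T,
      v (t + k * T) = (-ω) ^ (k + 1) * sin (t - π / (2 * ω)))
    (hαper : Function.Periodic α T)
    (hα1 : ∀ t ∈ Ioo 0 (π / (2 * ω)), α t = ω ^ 2)
    (hα2 : ∀ t ∈ Ioo (π / (2 * ω)) T, α t = 1) :
    ∀ᵐ t, 0 < t → HasDerivAt (deriv v) (-(α t * v t)) t := by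
  set a := π / (2 * ω)
  have hB : (range (fun k : ℕ => k * T) ∪ range (fun k : ℕ => k * T + a)).Countable :=
    (countable_range _).union (countable_range _)
  filter_upwards [hB.ae_notMem volume] with t htB ht
  obtain ⟨k, hkt, htk⟩ := exists_nat_mul_lt_lt_of_notMem hT ht fun h => htB (.inl h)
  have hα : α t = α (t - k * T) := by simpa using hαper.nat_mul k (t - k * T)
  rcases lt_trichotomy t (k * T + a) with h | h | h
  · rw [hα, hα1 _ ⟨by linarith, by linarith⟩]
    exact hasDerivAt_deriv_of_eqOn_sinusoid isOpen_Ioo ⟨hkt, h⟩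
      (eqOn_sinusoid_of_cos_piece hv1 k)
  · exact absurd (.inr ⟨k, h.symm⟩) htB
  · rw [hα, hα2 _ ⟨by linarith, by linarith⟩]
    simpa using hasDerivAt_deriv_of_eqOn_sinusoid isOpen_Ioo ⟨h, htk⟩
      (eqOn_sinusoid_of_sin_piece hv2 k)

end PiecewiseSolution

theorem stmt_10 (ω : ℝ) (hω : 1 < ω)
    (T : ℝ) (hT : T = π / (2 * ω) + π / 2)
    (v : ℝ → ℝ)
    (hv1 : ∀ k : ℕ, ∀ t ∈ Icc 0 (π / (2 * ω)),
      v (t + k * T) = (-ω) ^ k * Real.cos (ω * t))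
    (hv2 : ∀ k : ℕ, ∀ t ∈ Icc (π / (2 * ω)) T,
      v (t + k * T) = (-ω) ^ (k + 1) * Real.sin (t - π / (2 * ω)))
    (α : ℝ → ℝ)
    (hαper : ∀ t, α (t + T) = α t)
    (hα1 : ∀ t ∈ Ioo 0 (π / (2 * ω)), α t = ω ^ 2)
    (hα2 : ∀ t ∈ Ioo (π / (2 * ω)) T, α t = 1) :
    (∀ᵐ t ∂volume, 0 < t → HasDerivAt (deriv v) (-(α t * v t)) t) ∧
    (∀ k : ℕ, |v (k * T)| = ω ^ k) ∧
    ¬ ∃ M : ℝ, ∀ t : ℝ, 0 ≤ t → |v t| ≤ M := by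
  have hω₀ : 0 < ω := by linarith
  have hT₀ : 0 < T := by rw [hT]; positivity
  have hperiod_start (k : ℕ) : |v (k * T)| = ω ^ k := by
    simpa [abs_of_pos hω₀] using congrArg abs (hv1 k 0 ⟨le_rfl, by positivity⟩)
  refine ⟨ae_hasDerivAt_deriv_of_piecewise hT₀ hv1 hv2 hαper hα1 hα2, hperiod_start, ?_⟩
  rintro ⟨M, hM⟩
  obtain ⟨n, hn⟩ := pow_unbounded_of_one_lt M hω
  have := hM (n * T) (by positivity)
  rw [hperiod_start] at this
  linarith
end

section
/- Let ω > 1 and T = π/(2ω) + π/2, and suppose 0 < c < (4ω ln ω)/(π(1+ω)). Then ω > exp(cT/2), and consequently the function u(t) = exp(−ct/2) v(t) (with v the unbounded Hill solution satisfying |v(kT)| = ω^k) is unbounded on ℝ₊: |u(kT)| = (ω e^{−cT/2})^k → ∞. -/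
open Real Filter

theorem stmt_11 (ω : ℝ) (hω : 1 < ω)
    (T : ℝ) (hT : T = π / (2 * ω) + π / 2)
    (c : ℝ) (hc0 : 0 < c) (hc : c < 4 * ω * Real.log ω / (π * (1 + ω)))
    (v : ℝ → ℝ) (hv : ∀ k : ℕ, |v (k * T)| = ω ^ k)
    (u : ℝ → ℝ) (hu : u = fun t => Real.exp (-c * t / 2) * v t) :
    Real.exp (c * T / 2) < ω ∧
    (∀ k : ℕ, |u (k * T)| = (ω * Real.exp (-c * T / 2)) ^ k) ∧
    Tendsto (fun k : ℕ => |u (k * T)|) atTop atTop := by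
  have hω0 : (0:ℝ) < ω := lt_trans one_pos hω
  have hπ : (0:ℝ) < π := Real.pi_pos
  have hden : 0 < π * (1 + ω) := by positivity
  have h1 : Real.exp (c * T / 2) < ω := by
    rw [← Real.exp_log hω0]
    apply Real.exp_lt_exp.mpr
    rw [hT]
    rw [lt_div_iff₀ hden] at hc
    have heq : c * (π / (2 * ω) + π / 2) / 2 = c * (π * (1 + ω)) / (4 * ω) := by
      field_simp; ring
    rw [heq, div_lt_iff₀ (by positivity)]
    nlinarith
  have key : ∀ k : ℕ, |u (k * T)| = (ω * Real.exp (-c * T / 2)) ^ k := by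
    intro k
    rw [hu]
    simp only [abs_mul, Real.abs_exp, hv k]
    rw [mul_pow, ← Real.exp_nat_mul, mul_comm]
    congr 1
    ring
  refine ⟨h1, key, ?_⟩
  have h2 : 1 < ω * Real.exp (-c * T / 2) := by
    have heq : ω * Real.exp (-c * T / 2) = ω / Real.exp (c * T / 2) := by
      rw [show -c * T / 2 = -(c * T / 2) by ring, Real.exp_neg, div_eq_mul_inv]
      ring_nf
    rw [heq, lt_div_iff₀ (Real.exp_pos _), one_mul]
    exact h1
  exact (tendsto_pow_atTop_atTop_of_one_lt h2).congr fun k => (key k).symm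
end

section
/- For every ε > 0 there exist b > 1, c > 0 with c < 2√b, and a T-periodic measurable function a : ℝ₊ → ℝ with 0 ≤ a(t) ≤ C and C < (π + ε)·c·√b, such that the equation u'' + c u' + (b + a(t)) u = 0 has an unbounded solution on ℝ₊. -/
/-!
On `[0, π/2]` take `a = 0` and `y = sin`; on `[π/2, T]` take `a = Ω² - 1` and
`y = cos (Ω (t - π/2))`, where `T = π/2 + π/(2Ω)` is chosen so that `y` reaches `0` at `T` with
slope `-Ω`. So `y` is `C¹`, and after one period its Cauchy data are multiplied by `-Ω`: extending
quasi-periodically, `|y|` grows like `Ω^(t/T)`. The substitution `u = e^{-ct/2} y` turns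
`y'' + (1 + a) y = 0` into `u'' + c u' + (1 + c²/4 + a) u = 0`, and `u` is unbounded once
`Ω > e^{cT/2}`. Since `T < π`, `Ω = e^{cπ/2}` works, and then `C = Ω² - 1 = e^{πc} - 1 < (π + ε) c`
for small `c`.
-/

open MeasureTheory Real Filter Topology Set

theorem HasDerivAt.of_eventuallyEq_nhdsLE_nhdsGE {f g h : ℝ → ℝ} {d x : ℝ}
    (hg : HasDerivAt g d x) (hh : HasDerivAt h d x)
    (hfg : f =ᶠ[𝓝[≤] x] g) (hfh : f =ᶠ[𝓝[≥] x] h) : HasDerivAt f d x := by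
  have hle := hg.hasDerivWithinAt.congr_of_eventuallyEq hfg (hfg.eq_of_nhdsWithin self_mem_Iic)
  have hge := hh.hasDerivWithinAt.congr_of_eventuallyEq hfh (hfh.eq_of_nhdsWithin self_mem_Ici)
  simpa [Iic_union_Ici] using hle.union hge

theorem hasDerivAt_ite_le_of_ne {f g : ℝ → ℝ} {f' g' p x : ℝ} (hx : x ≠ p)
    (hf : HasDerivAt f f' x) (hg : HasDerivAt g g' x) :
    HasDerivAt (fun y => if y ≤ p then f y else g y) (if x ≤ p then f' else g') x := by
  rcases hx.lt_or_gt with hxp | hpx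
  · rw [if_pos hxp.le]
    exact hf.congr_of_eventuallyEq <| (eventually_lt_nhds hxp).mono fun y hy => if_pos hy.le
  · rw [if_neg hpx.not_ge]
    exact hg.congr_of_eventuallyEq <| (eventually_gt_nhds hpx).mono fun y hy => if_neg hy.not_ge

theorem hasDerivAt_ite_le {f g f' g' : ℝ → ℝ} {p : ℝ}
    (hf : ∀ x, HasDerivAt f (f' x) x) (hg : ∀ x, HasDerivAt g (g' x) x)
    (hp : f p = g p) (hp' : f' p = g' p) (x : ℝ) :
    HasDerivAt (fun y => if y ≤ p then f y else g y) (if x ≤ p then f' x else g' x) x := by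
  rcases eq_or_ne x p with rfl | hx
  · rw [if_pos le_rfl]
    refine (hf x).of_eventuallyEq_nhdsLE_nhdsGE (hp' ▸ hg x) ?_ ?_
    · exact eventually_nhdsWithin_of_forall fun y hy => if_pos hy
    · exact eventually_nhdsWithin_of_forall fun y (hy : x ≤ y) => by
        rcases hy.eq_or_lt with rfl | hy
        · simpa using hp
        · exact if_neg (not_le.mpr hy)
  · exact hasDerivAt_ite_le_of_ne hx (hf x) (hg x)

theorem exists_pos_exp_mul_sub_one_lt {a K : ℝ} (h : a < K) :
    ∃ c > 0, exp (a * c) - 1 < K * c := by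
  have hd : HasDerivAt (fun c => exp (a * c)) a 0 := by
    simpa using ((hasDerivAt_id (0 : ℝ)).const_mul a).exp
  obtain ⟨c, hslope, hc⟩ :=
    ((hd.tendsto_slope_zero_right.eventually (gt_mem_nhds h)).and self_mem_nhdsWithin).exists
  refine ⟨c, hc, ?_⟩
  simp only [zero_add, mul_zero, exp_zero, smul_eq_mul] at hslope
  rwa [inv_mul_lt_iff₀ hc, mul_comm c] at hslope

noncomputable def quasiPeriodicExt (T κ : ℝ) (φ : ℝ → ℝ) (t : ℝ) : ℝ :=
  κ ^ ⌊t / T⌋ * φ (t - ⌊t / T⌋ * T)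

namespace quasiPeriodicExt

variable {T κ : ℝ} {φ ψ : ℝ → ℝ}

theorem add_int_mul (hT : 0 < T) (hκ : κ ≠ 0) (t : ℝ) (n : ℤ) :
    quasiPeriodicExt T κ φ (t + n * T) = κ ^ n * quasiPeriodicExt T κ φ t := by
  have hfloor : ⌊(t + n * T) / T⌋ = ⌊t / T⌋ + n := by
    rw [add_div, mul_div_cancel_right₀ _ hT.ne', Int.floor_add_intCast]
  simp only [quasiPeriodicExt, hfloor, zpow_add₀ hκ, Int.cast_add]
  ring_nf

theorem eq_of_mem_Ico (hT : 0 < T) {s : ℝ} (hs : s ∈ Ico 0 T) :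
    quasiPeriodicExt T κ φ s = φ s := by
  have hfloor : ⌊s / T⌋ = 0 := by
    rw [Int.floor_eq_zero_iff]
    exact ⟨div_nonneg hs.1 hT.le, (div_lt_one hT).mpr hs.2⟩
  simp [quasiPeriodicExt, hfloor]

theorem add_int_mul_of_mem_Ico (hT : 0 < T) (hκ : κ ≠ 0) {s : ℝ} (hs : s ∈ Ico 0 T) (n : ℤ) :
    quasiPeriodicExt T κ φ (s + n * T) = κ ^ n * φ s := by
  rw [add_int_mul hT hκ, eq_of_mem_Ico hT hs]

theorem exists_eq_add_int_mul (hT : 0 < T) (t : ℝ) : ∃ s ∈ Ico 0 T, ∃ n : ℤ, t = s + n * T :=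
  ⟨toIcoMod hT 0 t, by simpa using toIcoMod_mem_Ico hT 0 t, toIcoDiv hT 0 t,
    by rw [toIcoMod, zsmul_eq_mul, sub_add_cancel]⟩

theorem one_apply (t : ℝ) : quasiPeriodicExt T 1 φ t = φ (t - ⌊t / T⌋ * T) := by
  simp [quasiPeriodicExt]

theorem periodic (hT : 0 < T) : Function.Periodic (quasiPeriodicExt T 1 φ) T := fun t => by
  simpa using add_int_mul (φ := φ) hT one_ne_zero t 1

theorem measurable (hφ : Measurable φ) : Measurable (quasiPeriodicExt T κ φ) := by
  have hfloor : Measurable fun t : ℝ => ⌊t / T⌋ :=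
    Int.measurable_floor.comp (measurable_id.div_const T)
  exact ((measurable_from_top.comp hfloor).mul
    (hφ.comp (measurable_id.sub ((measurable_from_top.comp hfloor).mul_const T))))

theorem hasDerivAt_add_int_mul (hT : 0 < T) (hκ : κ ≠ 0) {d s : ℝ}
    (h : HasDerivAt (quasiPeriodicExt T κ φ) d s) (n : ℤ) :
    HasDerivAt (quasiPeriodicExt T κ φ) (κ ^ n * d) (s + n * T) := by
  have hshift : quasiPeriodicExt T κ φ = fun t => κ ^ n * quasiPeriodicExt T κ φ (t - n * T) := by
    funext t
    rw [← add_int_mul hT hκ, sub_add_cancel]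
  rw [hshift]
  exact (HasDerivAt.comp_sub_const _ _ (by rwa [add_sub_cancel_right])).const_mul _

theorem hasDerivAt_of_mem_Ioo (hT : 0 < T) {d s : ℝ} (hs : s ∈ Ioo 0 T)
    (h : HasDerivAt φ d s) : HasDerivAt (quasiPeriodicExt T κ φ) d s :=
  h.congr_of_eventuallyEq <| eventually_of_mem (Ioo_mem_nhds hs.1 hs.2)
    fun _ hy => eq_of_mem_Ico hT (Ioo_subset_Ico_self hy)

theorem hasDerivAt_zero (hT : 0 < T) (hκ : κ ≠ 0) {d : ℝ}
    (h₀ : HasDerivAt φ d 0) (hT' : HasDerivAt φ (κ * d) T) (hφT : φ T = κ * φ 0) :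
    HasDerivAt (quasiPeriodicExt T κ φ) d 0 := by
  -- on `[-T, 0]` the extension is `κ⁻¹ * φ (t + T)`
  have hleft : HasDerivAt (fun t => κ⁻¹ * φ (t + T)) d 0 := by
    have := (HasDerivAt.comp_add_const 0 T (by rwa [zero_add])).const_mul κ⁻¹
    rwa [inv_mul_cancel_left₀ hκ] at this
  refine hleft.of_eventuallyEq_nhdsLE_nhdsGE h₀ ?_ ?_
  · filter_upwards [Icc_mem_nhdsLE (neg_lt_zero.mpr hT)] with t ht
    rcases ht.2.eq_or_lt with rfl | ht₀
    · simp [eq_of_mem_Ico hT ⟨le_rfl, hT⟩, hφT, inv_mul_cancel_left₀ hκ]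
    · have := add_int_mul_of_mem_Ico (φ := φ) hT hκ (s := t + T)
        ⟨by linarith [ht.1], by linarith⟩ (-1)
      simpa using this
  · filter_upwards [Ico_mem_nhdsGE hT] with t ht
    exact eq_of_mem_Ico hT ht

theorem hasDerivAt (hT : 0 < T) (hκ : κ ≠ 0) (hφ : ∀ s, HasDerivAt φ (ψ s) s)
    (hφT : φ T = κ * φ 0) (hψT : ψ T = κ * ψ 0) (t : ℝ) :
    HasDerivAt (quasiPeriodicExt T κ φ) (quasiPeriodicExt T κ ψ t) t := by
  obtain ⟨s, hs, n, rfl⟩ := exists_eq_add_int_mul hT t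
  rw [add_int_mul_of_mem_Ico hT hκ hs]
  refine hasDerivAt_add_int_mul hT hκ ?_ n
  rcases hs.1.eq_or_lt with rfl | hs₀
  · exact hasDerivAt_zero hT hκ (hφ 0) (hψT ▸ hφ T) hφT
  · exact hasDerivAt_of_mem_Ioo hT ⟨hs₀, hs.2⟩ (hφ s)

theorem ae_hasDerivAt (hT : 0 < T) (hκ : κ ≠ 0) {S : Set ℝ} (hS : S.Countable)
    (hφ : ∀ s ∈ Ioo 0 T, s ∉ S → HasDerivAt φ (ψ s) s) :
    ∀ᵐ t, HasDerivAt (quasiPeriodicExt T κ φ) (quasiPeriodicExt T κ ψ t) t := by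
  have hbad : (⋃ n : ℤ, (· + n * T) '' insert 0 S).Countable :=
    countable_iUnion fun _ => (hS.insert 0).image _
  filter_upwards [hbad.ae_notMem volume] with t ht
  obtain ⟨s, hs, n, rfl⟩ := exists_eq_add_int_mul hT t
  simp only [mem_iUnion, mem_image, mem_insert_iff, not_exists, not_and] at ht
  have hs₀ : 0 < s := hs.1.lt_of_ne fun h => ht n s (Or.inl h.symm) rfl
  rw [add_int_mul_of_mem_Ico hT hκ hs]
  exact hasDerivAt_add_int_mul hT hκ
    (hasDerivAt_of_mem_Ioo hT ⟨hs₀, hs.2⟩ (hφ s ⟨hs₀, hs.2⟩ fun h => ht n s (Or.inr h) rfl)) n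

end quasiPeriodicExt

theorem HasDerivAt.exp_damping {y : ℝ → ℝ} {d t : ℝ} (c : ℝ) (hy : HasDerivAt y d t) :
    HasDerivAt (fun s => rexp (-(c / 2) * s) * y s)
      (rexp (-(c / 2) * t) * (d - c / 2 * y t)) t := by
  have he : HasDerivAt (fun s => rexp (-(c / 2) * s)) (rexp (-(c / 2) * t) * -(c / 2)) t := by
    simpa using ((hasDerivAt_id t).const_mul (-(c / 2))).exp
  exact (he.mul hy).congr_deriv (by ring)

theorem HasDerivAt.exp_damping_deriv {y y' : ℝ → ℝ} {q t : ℝ} (c : ℝ)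
    (hy : HasDerivAt y (y' t) t) (hy' : HasDerivAt y' (-(q * y t)) t) :
    HasDerivAt (fun s => rexp (-(c / 2) * s) * (y' s - c / 2 * y s))
      (-(c * (rexp (-(c / 2) * t) * (y' t - c / 2 * y t)) +
        (q + c ^ 2 / 4) * (rexp (-(c / 2) * t) * y t))) t :=
  ((hy'.sub (hy.const_mul (c / 2))).exp_damping c).congr_deriv (by simp only [Pi.sub_apply]; ring)

theorem not_exists_abs_exp_damping_le {y : ℝ → ℝ} {c T t₀ Ω : ℝ} (hT : 0 ≤ T) (ht₀ : 0 ≤ t₀)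
    (hy : ∀ n : ℕ, |y (t₀ + n * T)| = Ω ^ n) (hgrowth : exp (c * T / 2) < Ω) :
    ¬ ∃ M, ∀ t, 0 ≤ t → |exp (-(c / 2) * t) * y t| ≤ M := by
  rintro ⟨M, hM⟩
  obtain ⟨r, hr_def, hr⟩ : ∃ r, r = Ω * exp (-(c * T / 2)) ∧ 1 < r :=
    ⟨_, rfl, by rwa [exp_neg, ← div_eq_mul_inv, one_lt_div (exp_pos _)]⟩
  obtain ⟨n, hn⟩ := pow_unbounded_of_one_lt (exp (c / 2 * t₀) * M) hr
  have hval : |exp (-(c / 2) * (t₀ + n * T)) * y (t₀ + n * T)| = exp (-(c / 2) * t₀) * r ^ n := by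
    rw [abs_mul, abs_exp, hy, hr_def, mul_pow, ← exp_nat_mul, mul_left_comm, ← exp_add]
    ring_nf
  have hle := hM (t₀ + n * T) (by positivity)
  rw [hval] at hle
  have : r ^ n ≤ exp (c / 2 * t₀) * M := calc
    r ^ n = exp (c / 2 * t₀) * (exp (-(c / 2) * t₀) * r ^ n) := by
      rw [← mul_assoc, ← exp_add]; ring_nf; simp
    _ ≤ exp (c / 2 * t₀) * M := by gcongr
  linarith

namespace Hill

variable {Ω : ℝ}

noncomputable def period (Ω : ℝ) : ℝ := π / 2 + π / (2 * Ω)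

noncomputable def profile (Ω s : ℝ) : ℝ := if s ≤ π / 2 then sin s else cos (Ω * (s - π / 2))

noncomputable def profileDeriv (Ω s : ℝ) : ℝ :=
  if s ≤ π / 2 then cos s else -(Ω * sin (Ω * (s - π / 2)))

noncomputable def coeffProfile (Ω s : ℝ) : ℝ := if s ≤ π / 2 then 0 else Ω ^ 2 - 1

theorem pi_div_two_lt_period (hΩ : 0 < Ω) : π / 2 < period Ω := by
  unfold period; linarith [show 0 < π / (2 * Ω) by positivity]

theorem period_lt_pi (hΩ : 1 < Ω) : period Ω < π := by
  have : π / (2 * Ω) < π / 2 := div_lt_div_of_pos_left pi_pos two_pos (by linarith)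
  unfold period; linarith

theorem mul_period_sub_pi_div_two (hΩ : Ω ≠ 0) : Ω * (period Ω - π / 2) = π / 2 := by
  unfold period; field_simp; ring

theorem hasDerivAt_profile (Ω s : ℝ) : HasDerivAt (profile Ω) (profileDeriv Ω s) s := by
  have hcos : ∀ x, HasDerivAt (fun x => cos (Ω * (x - π / 2))) (-(Ω * sin (Ω * (x - π / 2)))) x :=
    fun x => by simpa [mul_comm] using (((hasDerivAt_id x).sub_const (π / 2)).const_mul Ω).cos
  exact hasDerivAt_ite_le hasDerivAt_sin hcos (by simp) (by simp) s

theorem hasDerivAt_profileDeriv {s : ℝ} (hs : s ≠ π / 2) :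
    HasDerivAt (profileDeriv Ω) (-((1 + coeffProfile Ω s) * profile Ω s)) s := by
  have hsin : HasDerivAt (fun x => -(Ω * sin (Ω * (x - π / 2))))
      (-(Ω * (cos (Ω * (s - π / 2)) * Ω))) s := by
    simpa using ((((hasDerivAt_id s).sub_const (π / 2)).const_mul Ω).sin.const_mul (-Ω))
  refine (hasDerivAt_ite_le_of_ne hs (hasDerivAt_cos s) hsin).congr_deriv ?_
  unfold coeffProfile profile
  split_ifs <;> ring

theorem profile_period (hΩ : 0 < Ω) : profile Ω (period Ω) = -Ω * profile Ω 0 := by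
  rw [profile, profile, if_neg (pi_div_two_lt_period hΩ).not_ge, if_pos (by positivity),
    mul_period_sub_pi_div_two hΩ.ne']
  simp

theorem profileDeriv_period (hΩ : 0 < Ω) :
    profileDeriv Ω (period Ω) = -Ω * profileDeriv Ω 0 := by
  rw [profileDeriv, profileDeriv, if_neg (pi_div_two_lt_period hΩ).not_ge, if_pos (by positivity),
    mul_period_sub_pi_div_two hΩ.ne']
  simp

theorem measurable_coeffProfile : Measurable (coeffProfile Ω) :=
  Measurable.ite measurableSet_Iic measurable_const measurable_const

theorem coeffProfile_mem_Icc (hΩ : 1 ≤ Ω) (s : ℝ) : coeffProfile Ω s ∈ Icc 0 (Ω ^ 2 - 1) := by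
  have : 0 ≤ Ω ^ 2 - 1 := by nlinarith
  unfold coeffProfile; split_ifs <;> simp [this]

noncomputable def sol (Ω : ℝ) : ℝ → ℝ := quasiPeriodicExt (period Ω) (-Ω) (profile Ω)

noncomputable def solDeriv (Ω : ℝ) : ℝ → ℝ := quasiPeriodicExt (period Ω) (-Ω) (profileDeriv Ω)

noncomputable def coeff (Ω : ℝ) : ℝ → ℝ := quasiPeriodicExt (period Ω) 1 (coeffProfile Ω)

theorem period_pos (hΩ : 0 < Ω) : 0 < period Ω := by
  unfold period; positivity

theorem hasDerivAt_sol (hΩ : 0 < Ω) (t : ℝ) : HasDerivAt (sol Ω) (solDeriv Ω t) t :=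
  quasiPeriodicExt.hasDerivAt (period_pos hΩ) (neg_ne_zero.mpr hΩ.ne') (hasDerivAt_profile Ω)
    (profile_period hΩ) (profileDeriv_period hΩ) t

theorem ae_hasDerivAt_solDeriv (hΩ : 0 < Ω) :
    ∀ᵐ t, HasDerivAt (solDeriv Ω) (-((1 + coeff Ω t) * sol Ω t)) t := by
  filter_upwards [quasiPeriodicExt.ae_hasDerivAt (period_pos hΩ) (neg_ne_zero.mpr hΩ.ne')
    (countable_singleton (π / 2)) fun s _ hs => hasDerivAt_profileDeriv (Ω := Ω) hs] with t ht
  refine ht.congr_deriv ?_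
  simp only [coeff, sol, quasiPeriodicExt, one_zpow, one_mul]
  ring

theorem sol_pi_div_two_add (hΩ : 0 < Ω) (n : ℕ) : sol Ω (π / 2 + n * period Ω) = (-Ω) ^ n := by
  have := quasiPeriodicExt.add_int_mul_of_mem_Ico (φ := profile Ω) (period_pos hΩ)
    (neg_ne_zero.mpr hΩ.ne') ⟨pi_div_two_pos.le, pi_div_two_lt_period hΩ⟩ n
  simpa [sol, profile] using this

theorem measurable_coeff : Measurable (coeff Ω) :=
  quasiPeriodicExt.measurable measurable_coeffProfile

theorem coeff_periodic (hΩ : 0 < Ω) : Function.Periodic (coeff Ω) (period Ω) :=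
  quasiPeriodicExt.periodic (period_pos hΩ)

theorem coeff_mem_Icc (hΩ : 1 ≤ Ω) (t : ℝ) : coeff Ω t ∈ Icc 0 (Ω ^ 2 - 1) := by
  rw [coeff, quasiPeriodicExt.one_apply]
  exact coeffProfile_mem_Icc hΩ _

end Hill

theorem stmt_14 (ε : ℝ) (hε : 0 < ε) :
    ∃ b c C T : ℝ, 1 < b ∧ 0 < c ∧ c < 2 * Real.sqrt b ∧ 0 < T ∧
      C < (π + ε) * c * Real.sqrt b ∧
      ∃ a : ℝ → ℝ, Measurable a ∧ (∀ t, a (t + T) = a t) ∧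
        (∀ t, 0 ≤ t → 0 ≤ a t ∧ a t ≤ C) ∧
        ∃ u u' : ℝ → ℝ,
          (∀ t, 0 ≤ t → HasDerivAt u (u' t) t) ∧
          (∀ᵐ t ∂volume, 0 ≤ t →
            HasDerivAt u' (-(c * u' t + (b + a t) * u t)) t) ∧
          ¬ ∃ M : ℝ, ∀ t : ℝ, 0 ≤ t → |u t| ≤ M := by
  obtain ⟨c, hc, hexp⟩ := exists_pos_exp_mul_sub_one_lt (lt_add_of_pos_right π hε)
  set Ω := exp (c * π / 2)
  have hΩpos : 0 < Ω := exp_pos _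
  have hΩ : 1 < Ω := one_lt_exp_iff.mpr (by positivity)
  have hΩsq : Ω ^ 2 = exp (π * c) := by rw [← exp_nat_mul]; ring_nf
  have hsqrt : 1 ≤ √(1 + c ^ 2 / 4) := one_le_sqrt.mpr (le_add_of_nonneg_right (by positivity))
  refine ⟨1 + c ^ 2 / 4, c, Ω ^ 2 - 1, Hill.period Ω, lt_add_of_pos_right 1 (by positivity), hc, ?_,
    Hill.period_pos hΩpos, ?_, Hill.coeff Ω, Hill.measurable_coeff, Hill.coeff_periodic hΩpos,
    fun t _ => Hill.coeff_mem_Icc hΩ.le t,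
    fun t => exp (-(c / 2) * t) * Hill.sol Ω t,
    fun t => exp (-(c / 2) * t) * (Hill.solDeriv Ω t - c / 2 * Hill.sol Ω t),
    fun t _ => (Hill.hasDerivAt_sol hΩpos t).exp_damping c, ?_, ?_⟩
  · have : c / 2 < √(1 + c ^ 2 / 4) := (lt_sqrt (by positivity)).mpr (by nlinarith)
    linarith
  · rw [hΩsq]
    nlinarith [mul_le_mul_of_nonneg_left hsqrt (by positivity : 0 ≤ (π + ε) * c)]
  · filter_upwards [Hill.ae_hasDerivAt_solDeriv hΩpos] with t ht _
    exact ((Hill.hasDerivAt_sol hΩpos t).exp_damping_deriv c ht).congr_deriv (by ring)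
  · refine not_exists_abs_exp_damping_le (Hill.period_pos hΩpos).le pi_div_two_pos.le
      (fun n => by rw [Hill.sol_pi_div_two_add hΩpos, abs_pow, abs_neg, abs_of_pos hΩpos]) ?_
    exact exp_lt_exp.mpr (by nlinarith [Hill.period_lt_pi hΩ])
end

section
/- Let g ∈ C¹(ℝ) with g(0)=0 and g'(s) ≥ b > 0 for all s, let c > 0, f ∈ L^∞([t₀,∞)), and let u, v be two bounded solutions of u'' + c u' + g(u) = f(t) on J = [t₀, ∞). Set M = max of the limsups at +∞ of |u| and |v|, and A = sup_{|s| ≤ M} (g'(s) − b). If A < c·max{c, 2√b}, then there exist δ > 0 and K > 0 such that |u(t) − v(t)| + |u'(t) − v'(t)| ≤ K exp(−δ t) for all t ∈ J. -/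
open Real Filter Set Metric

/-!
By the mean value theorem `w = u - v` solves `w'' + c w' + p(t) w = 0` with `p(t) = g'(ξ(t))`.
Once `u` and `v` stay in a neighbourhood of `[-M, M]` on which `g' < B`, we have `p(t) ∈ [b, B]`,
and the hypothesis on `A` leaves room for `B < (c + √b)²`. For such `B` there is a weight `s > 0`
with `|c²/4 + s² - p| < c s` on `[b, B]`; then the energy `(w' + c w / 2)² + s² w²` satisfies
`E' ≤ -κ E` for some `κ > 0`, so it decays exponentially (Grönwall) and controls `|w| + |w'|`.
On the remaining compact initial interval the bound follows from continuity.
-/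

theorem exists_sub_eq_mul_sub_of_deriv_mem_Icc {g : ℝ → ℝ} {D : Set ℝ} {m m' : ℝ}
    (hD : Convex ℝ D) (hg : Differentiable ℝ g) (hgD : ∀ x ∈ D, deriv g x ∈ Icc m m')
    {x y : ℝ} (hx : x ∈ D) (hy : y ∈ D) : ∃ p ∈ Icc m m', g x - g y = p * (x - y) := by
  wlog hyx : y ≤ x generalizing x y
  · obtain ⟨p, hp, h⟩ := this hy hx (le_of_not_ge hyx)
    exact ⟨p, hp, by linear_combination -h⟩
  rcases hyx.eq_or_lt with rfl | hlt
  · exact ⟨deriv g y, hgD y hy, by simp⟩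
  obtain ⟨ξ, hξ, hξg⟩ := exists_deriv_eq_slope g hlt hg.continuous.continuousOn hg.differentiableOn
  refine ⟨deriv g ξ, hgD ξ (hD.ordConnected.out hy hx (Ioo_subset_Icc_self hξ)), ?_⟩
  rw [hξg, div_mul_cancel₀ _ (sub_ne_zero.2 hlt.ne')]

theorem le_mul_exp_of_deriv_le_neg_mul {E E' : ℝ → ℝ} {T l : ℝ}
    (hE : ∀ t ≥ T, HasDerivAt E (E' t) t) (hE' : ∀ t ≥ T, E' t ≤ -l * E t) :
    ∀ t ≥ T, E t ≤ E T * exp (-l * (t - T)) := by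
  intro t ht
  rw [← gronwallBound_ε0]
  refine le_gronwallBound_of_liminf_deriv_right_le (f' := E') (b := t)
    (fun x hx => (hE x hx.1).continuousAt.continuousWithinAt)
    (fun x hx r hr => (hE x hx.1).hasDerivWithinAt.liminf_right_slope_le hr) le_rfl
    (fun x hx => by simpa using hE' x hx.1) t ⟨ht, le_rfl⟩

theorem exists_gt_forall_mem_ball_lt {E : Type*} [NormedAddCommGroup E] [NormedSpace ℝ E]
    [ProperSpace E] {h : E → ℝ} (hh : Continuous h) {M B : ℝ} (hM : 0 ≤ M)
    (hB : ∀ x ∈ closedBall 0 M, h x < B) : ∃ ρ > M, ∀ x ∈ ball 0 ρ, h x < B := by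
  obtain ⟨ε, hε, hsub⟩ := (isCompact_closedBall (0 : E) M).exists_thickening_subset_open
    (isOpen_lt hh continuous_const) hB
  rw [thickening_closedBall hε hM] at hsub
  exact ⟨ε + M, by linarith, hsub⟩

theorem isBoundedUnder_abs_atTop {φ : ℝ → ℝ} {t₀ : ℝ} (hφ : ∃ K, ∀ t, t₀ ≤ t → |φ t| ≤ K) :
    IsBoundedUnder (· ≤ ·) atTop fun t => |φ t| :=
  let ⟨_, hK⟩ := hφ
  isBoundedUnder_of_eventually_le (eventually_atTop.2 ⟨t₀, hK⟩)

theorem exists_exp_bound_of_continuousOn {φ : ℝ → ℝ} {t₀ T δ K : ℝ} (hδ : 0 ≤ δ) (hK : 0 < K)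
    (hφ : ContinuousOn φ (Icc t₀ T)) (hφT : ∀ t ≥ T, φ t ≤ K * exp (-δ * t)) :
    ∃ K' > 0, ∀ t ≥ t₀, φ t ≤ K' * exp (-δ * t) := by
  obtain ⟨C, hC⟩ := isCompact_Icc.exists_bound_of_continuousOn hφ
  refine ⟨K + |C| * exp (δ * T), by positivity, fun t ht => ?_⟩
  rcases le_total T t with hTt | htT
  · calc φ t ≤ K * exp (-δ * t) := hφT t hTt
      _ ≤ _ := by gcongr; exact le_add_of_nonneg_right (by positivity)
  · calc φ t ≤ |C| := (le_abs_self _).trans ((hC t ⟨ht, htT⟩).trans (le_abs_self C))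
      _ ≤ |C| * exp (δ * T) * exp (-δ * t) := by
          rw [mul_assoc, ← exp_add]
          exact le_mul_of_one_le_right (abs_nonneg _) (one_le_exp (by nlinarith))
      _ ≤ _ := by gcongr; exact le_add_of_nonneg_left hK.le

theorem exists_gt_forall_abs_lt_sub_eq_mul_sub {g : ℝ → ℝ} {b B M : ℝ} (hg : ContDiff ℝ 1 g)
    (hg' : ∀ s, b ≤ deriv g s) (hM : 0 ≤ M) (hB : ∀ x ∈ Icc (-M) M, deriv g x < B) :
    ∃ ρ > M, ∀ x y, |x| < ρ → |y| < ρ → ∃ p ∈ Icc b B, g x - g y = p * (x - y) := by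
  obtain ⟨ρ, hρM, hρ⟩ := exists_gt_forall_mem_ball_lt (hg.continuous_deriv le_rfl) hM
    (by rwa [closedBall_zero_eq_Icc])
  refine ⟨ρ, hρM, fun x y hx hy => exists_sub_eq_mul_sub_of_deriv_mem_Icc (convex_ball 0 ρ)
    (hg.differentiable one_ne_zero) (fun z hz => ⟨hg' z, (hρ z hz).le⟩) ?_ ?_⟩ <;>
    rwa [mem_ball_zero_iff, norm_eq_abs]

theorem add_lt_sq_add_sqrt_of_lt_mul_max {b c A : ℝ} (hb : 0 ≤ b) (hc : 0 ≤ c)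
    (hA : A < c * max c (2 * √b)) : b + A < (c + √b) ^ 2 := by
  have : max c (2 * √b) ≤ c + 2 * √b :=
    max_le (le_add_of_nonneg_right (by positivity)) (le_add_of_nonneg_left hc)
  nlinarith [sq_sqrt hb]

theorem exists_lyapunov_weight {b c B : ℝ} (hb : 0 < b) (hc : 0 < c) (hB : B < (c + √b) ^ 2) :
    ∃ s > 0, ∃ r < c * s, ∀ p ∈ Icc b B, |c ^ 2 / 4 + s ^ 2 - p| ≤ r := by
  have hsb : 0 < √b := sqrt_pos.2 hb
  have hsB : √B < c + √b := (sqrt_lt' (by positivity)).2 hB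
  -- The bound on `[b, B]` amounts to `(s - c / 2) ^ 2 < b` and `B < (s + c / 2) ^ 2`.
  obtain ⟨s, hLs, hsU⟩ :=
    exists_between (show max (max (c / 2 - √b) (√B - c / 2)) 0 < c / 2 + √b by
      simp only [max_lt_iff]; refine ⟨⟨?_, ?_⟩, ?_⟩ <;> linarith)
  simp only [max_lt_iff] at hLs
  obtain ⟨⟨hs₁, hs₂⟩, hs₀⟩ := hLs
  have hlow : (s - c / 2) ^ 2 < b := by
    rw [← sq_sqrt hb.le]; exact sq_lt_sq' (by linarith) (by linarith)
  have hup : B < (s + c / 2) ^ 2 := (sqrt_lt' (by linarith)).1 (by linarith)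
  refine ⟨s, hs₀, max (c ^ 2 / 4 + s ^ 2 - b) (B - c ^ 2 / 4 - s ^ 2),
    max_lt (by nlinarith) (by nlinarith), fun p hp => abs_le.2 ⟨?_, ?_⟩⟩
  · linarith [le_max_right (c ^ 2 / 4 + s ^ 2 - b) (B - c ^ 2 / 4 - s ^ 2), hp.2]
  · linarith [le_max_left (c ^ 2 / 4 + s ^ 2 - b) (B - c ^ 2 / 4 - s ^ 2), hp.1]

noncomputable def dampedEnergy (c s : ℝ) (w w' : ℝ → ℝ) (t : ℝ) : ℝ :=
  (w' t + c / 2 * w t) ^ 2 + s ^ 2 * w t ^ 2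

section DampedEnergy

variable {c s t : ℝ} {w w' : ℝ → ℝ}

theorem hasDerivAt_dampedEnergy {G : ℝ} (hw : HasDerivAt w (w' t) t)
    (hw' : HasDerivAt w' (-(c * w' t) - G) t) :
    HasDerivAt (dampedEnergy c s w w')
      (-c * dampedEnergy c s w w' t + 2 * (w' t + c / 2 * w t) * ((c ^ 2 / 4 + s ^ 2) * w t - G))
      t := by
  have h : HasDerivAt (fun τ => (w' τ + c / 2 * w τ) ^ 2 + s ^ 2 * w τ ^ 2) _ t :=
    ((hw'.fun_add (hw.const_mul (c / 2))).fun_pow 2).fun_add ((hw.fun_pow 2).const_mul (s ^ 2))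
  exact h.congr_deriv (by simp only [dampedEnergy]; ring)

theorem dampedEnergy_deriv_le {k r : ℝ} (hs : 0 < s) (hk : |k| ≤ r) :
    -c * dampedEnergy c s w w' t + 2 * (w' t + c / 2 * w t) * (k * w t)
      ≤ -(c - r / s) * dampedEnergy c s w w' t := by
  set z := w' t + c / 2 * w t
  have hzw : 2 * z * (k * w t) ≤ r * (2 * |z| * |w t|) := calc
    2 * z * (k * w t) ≤ |k| * (2 * |z| * |w t|) := by
      rw [← abs_two, ← abs_mul, ← abs_mul, ← abs_mul]; exact (le_abs_self _).trans_eq (by ring_nf)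
    _ ≤ r * (2 * |z| * |w t|) := by gcongr
  have hamgm : s * (2 * |z| * |w t|) ≤ z ^ 2 + s ^ 2 * w t ^ 2 := by
    have := two_mul_le_add_sq |z| (s * |w t|)
    rw [mul_pow, sq_abs, sq_abs] at this
    linarith
  have hr : 0 ≤ r := (abs_nonneg k).trans hk
  have : r * (2 * |z| * |w t|) ≤ r / s * dampedEnergy c s w w' t := by
    rw [div_mul_eq_mul_div, le_div_iff₀ hs]
    simpa [dampedEnergy, mul_assoc, mul_comm s] using mul_le_mul_of_nonneg_left hamgm hr
  linarith

theorem abs_add_abs_le_mul_sqrt_dampedEnergy (hc : 0 ≤ c) (hs : 0 < s) :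
    |w t| + |w' t| ≤ (1 + (1 + c / 2) / s) * √(dampedEnergy c s w w' t) := by
  obtain ⟨z, hz⟩ : ∃ z, z = w' t + c / 2 * w t := ⟨_, rfl⟩
  have hE : dampedEnergy c s w w' t = z ^ 2 + (s * w t) ^ 2 := by rw [hz, mul_pow]; rfl
  have hzE : |z| ≤ √(dampedEnergy c s w w' t) := abs_le_sqrt (by rw [hE]; nlinarith)
  have hwE : |w t| ≤ √(dampedEnergy c s w w' t) / s := by
    rw [le_div_iff₀ hs, mul_comm, ← abs_of_pos hs, ← abs_mul, abs_of_pos hs]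
    exact abs_le_sqrt (by rw [hE]; nlinarith)
  have hw' : |w' t| ≤ |z| + c / 2 * |w t| := by
    calc |w' t| = |z - c / 2 * w t| := by rw [hz, add_sub_cancel_right]
      _ ≤ |z| + |c / 2 * w t| := abs_sub _ _
      _ = |z| + c / 2 * |w t| := by rw [abs_mul, abs_of_nonneg (by positivity : 0 ≤ c / 2)]
  calc |w t| + |w' t| ≤ √(dampedEnergy c s w w' t) + (1 + c / 2) * |w t| := by linarith
    _ ≤ √(dampedEnergy c s w w' t) + (1 + c / 2) * (√(dampedEnergy c s w w' t) / s) := by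
        gcongr
    _ = _ := by ring

theorem dampedEnergy_nonneg : 0 ≤ dampedEnergy c s w w' t := by
  unfold dampedEnergy; positivity

end DampedEnergy

theorem exists_exp_decay_of_damped_linear {b c B T : ℝ} (hb : 0 < b) (hc : 0 < c)
    (hB : B < (c + √b) ^ 2) {w w' G : ℝ → ℝ} (hw : ∀ t ≥ T, HasDerivAt w (w' t) t)
    (hw' : ∀ t ≥ T, HasDerivAt w' (-(c * w' t) - G t) t)
    (hG : ∀ t ≥ T, ∃ p ∈ Icc b B, G t = p * w t) :
    ∃ δ > 0, ∃ K > 0, ∀ t ≥ T, |w t| + |w' t| ≤ K * exp (-δ * t) := by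
  obtain ⟨s, hs, r, hr, hk⟩ := exists_lyapunov_weight hb hc hB
  set E := dampedEnergy c s w w'
  set κ := c - r / s
  have hκ : 0 < κ := by rw [sub_pos, div_lt_iff₀ hs]; linarith
  have hE : ∀ t ≥ T, E t ≤ E T * exp (-κ * (t - T)) := by
    refine le_mul_exp_of_deriv_le_neg_mul
      (fun t ht => hasDerivAt_dampedEnergy (hw t ht) (hw' t ht)) fun t ht => ?_
    obtain ⟨p, hp, hGp⟩ := hG t ht
    rw [hGp, ← sub_mul]
    exact dampedEnergy_deriv_le hs (hk p hp)
  set C := 1 + (1 + c / 2) / s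
  refine ⟨κ / 2, by positivity, C * √(E T) * exp (κ / 2 * T) + 1, by positivity, fun t ht => ?_⟩
  calc |w t| + |w' t| ≤ C * √(E t) := abs_add_abs_le_mul_sqrt_dampedEnergy hc.le hs
    _ ≤ C * √(E T * exp (-κ * (t - T))) := by gcongr; exact hE t ht
    _ = C * √(E T) * exp (κ / 2 * T) * exp (-(κ / 2) * t) := by
        rw [sqrt_mul dampedEnergy_nonneg, ← exp_half, ← mul_assoc, mul_assoc _ (exp _), ← exp_add]
        congr 2
        ring
    _ ≤ _ := by gcongr; linarith

theorem stmt_15_general (b c t₀ : ℝ) (hb : 0 < b) (hc : 0 < c)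
    (g : ℝ → ℝ) (hg : ContDiff ℝ 1 g)
    (hg' : ∀ s : ℝ, b ≤ deriv g s)
    (f : ℝ → ℝ)
    (u u' v v' : ℝ → ℝ)
    (hu1 : ∀ t, t₀ ≤ t → HasDerivAt u (u' t) t)
    (hu2 : ∀ t, t₀ ≤ t →
      HasDerivAt u' (f t - c * u' t - g (u t)) t)
    (hv1 : ∀ t, t₀ ≤ t → HasDerivAt v (v' t) t)
    (hv2 : ∀ t, t₀ ≤ t →
      HasDerivAt v' (f t - c * v' t - g (v t)) t)
    (hubd : ∃ Ku : ℝ, ∀ t, t₀ ≤ t → |u t| ≤ Ku)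
    (hvbd : ∃ Kv : ℝ, ∀ t, t₀ ≤ t → |v t| ≤ Kv)
    (M A : ℝ)
    (hM : M = max (limsup (fun t => |u t|) atTop) (limsup (fun t => |v t|) atTop))
    (hA : A = sSup ((fun s => deriv g s - b) '' Icc (-M) M))
    (hAcond : A < c * max c (2 * Real.sqrt b)) :
    ∃ δ > 0, ∃ K > 0, ∀ t, t₀ ≤ t →
      |u t - v t| + |u' t - v' t| ≤ K * Real.exp (-δ * t) := by
  have hbu := isBoundedUnder_abs_atTop hubd
  have hbv := isBoundedUnder_abs_atTop hvbd
  have hM₀ : 0 ≤ M := hM ▸ (le_limsup_of_frequently_le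
    (.of_forall fun t => abs_nonneg (u t)) hbu).trans (le_max_left _ _)
  obtain ⟨B, hAB, hB⟩ := exists_between (add_lt_sq_add_sqrt_of_lt_mul_max hb.le hc.le hAcond)
  obtain ⟨ρ, hρM, hslope⟩ := exists_gt_forall_abs_lt_sub_eq_mul_sub (B := B) hg hg' hM₀
    fun x hx => by
      have := hA ▸ ContinuousOn.le_sSup_image_Icc (f := fun s => deriv g s - b)
        ((hg.continuous_deriv le_rfl).sub continuous_const).continuousOn hx
      linarith
  obtain ⟨T, hT⟩ := eventually_atTop.1
    ((eventually_lt_of_limsup_lt ((hM ▸ le_max_left _ _).trans_lt hρM) hbu).and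
      (eventually_lt_of_limsup_lt ((hM ▸ le_max_right _ _).trans_lt hρM) hbv))
  have ht₀ {t : ℝ} (ht : max T t₀ ≤ t) : t₀ ≤ t := le_of_max_le_right ht
  obtain ⟨δ, hδ, K, hK, hdecay⟩ := exists_exp_decay_of_damped_linear (T := max T t₀)
    (w := u - v) (w' := u' - v') (G := fun t => g (u t) - g (v t)) hb hc hB
    (fun t ht => (hu1 t (ht₀ ht)).sub (hv1 t (ht₀ ht)))
    (fun t ht => ((hu2 t (ht₀ ht)).sub (hv2 t (ht₀ ht))).congr_deriv
      (by simp only [Pi.sub_apply]; ring))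
    (fun t ht => hslope _ _ (hT t (le_of_max_le_left ht)).1 (hT t (le_of_max_le_left ht)).2)
  obtain ⟨K', hK', hbound⟩ := exists_exp_bound_of_continuousOn hδ.le hK (fun t ht =>
    ((((hu1 t ht.1).sub (hv1 t ht.1)).continuousAt.abs).add
      (((hu2 t ht.1).sub (hv2 t ht.1)).continuousAt.abs)).continuousWithinAt) hdecay
  exact ⟨δ, hδ, K', hK', hbound⟩

theorem stmt_15 (b c t₀ : ℝ) (hb : 0 < b) (hc : 0 < c)
    (g : ℝ → ℝ) (hg : ContDiff ℝ 1 g) (hg0 : g 0 = 0)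
    (hg' : ∀ s : ℝ, b ≤ deriv g s)
    (f : ℝ → ℝ) (hf : ∃ Cf : ℝ, ∀ t, t₀ ≤ t → |f t| ≤ Cf)
    (u u' v v' : ℝ → ℝ)
    (hu1 : ∀ t, t₀ ≤ t → HasDerivAt u (u' t) t)
    (hu2 : ∀ t, t₀ ≤ t →
      HasDerivAt u' (f t - c * u' t - g (u t)) t)
    (hv1 : ∀ t, t₀ ≤ t → HasDerivAt v (v' t) t)
    (hv2 : ∀ t, t₀ ≤ t →
      HasDerivAt v' (f t - c * v' t - g (v t)) t)
    (hubd : ∃ Ku : ℝ, ∀ t, t₀ ≤ t → |u t| ≤ Ku)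
    (hvbd : ∃ Kv : ℝ, ∀ t, t₀ ≤ t → |v t| ≤ Kv)
    (M A : ℝ)
    (hM : M = max (limsup (fun t => |u t|) atTop) (limsup (fun t => |v t|) atTop))
    (hA : A = sSup ((fun s => deriv g s - b) '' Icc (-M) M))
    (hAcond : A < c * max c (2 * Real.sqrt b)) :
    ∃ δ > 0, ∃ K > 0, ∀ t, t₀ ≤ t →
      |u t - v t| + |u' t - v' t| ≤ K * Real.exp (-δ * t) :=
  stmt_15_general b c t₀ hb hc g hg hg' f u u' v v' hu1 hu2 hv1 hv2 hubd hvbd M A hM hA hAcond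
end
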